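/- arXiv:2012.14222 — 2 statements merged into one kernel-verified Lean document; each statement's English description precedes it below -/
import Mathlib

section
/- Let γ : [0,1] → ℝ⁴ \ {0} be a smooth curve which is the lift of a convex curve in ℝP³, i.e., for every nonzero linear functional f on ℝ⁴ the sum of the orders of vanishing of f∘γ over its zeros in [0,1] is at most 3. Then for any 0 < s₁ < s₂ < s₃ < s₄ < 1 there exist an invertible linear map g ∈ GL₄(ℝ) and, for each i = 1,…,4, two vectors uᵢ, vᵢ spanning the 2-dimensional subspace span{γ(sᵢ), γ′(sᵢ)}, such that the 4×8 real matrix with columns g·u₁, g·v₁, g·u₂, g·v₂, g·u₃, g·v₃, g·u₄, g·v₄ has all of its 4×4 minors strictly positive. -/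
/-!
A nonzero functional killing `γ(t)` at some points of `[0,1]` and `γ'(t)` at some of those points
vanishes along `γ` to total order at least the number of conditions, which convexity bounds by `3`:
so every confluent determinant, with rows `γ(tⱼ)` or `γ'(tⱼ)` and each `γ'(t)` accompanied by `γ(t)`,
is nonzero. Increasing `4`-tuples in `[0,1]` form a connected set, so `det (γ(t₁), …, γ(t₄))` has a
constant sign `σ` on it; a confluent determinant with lexicographically sorted rows is the limit of
`δ⁻ᵖ det (γ(τ₁), …, γ(τ₄))`, with the points of its `p` derivative rows moved right by `δ`, so it has
sign `σ` too. With `uᵢ = γ(sᵢ)`, `vᵢ = γ(sᵢ) + ε γ'(sᵢ)`, each `4 × 4` minor is `εᵖ` times a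
determinant tending to a confluent one as `ε → 0`, hence has sign `σ` for small `ε`; any `g` with
`det g` of sign `σ`, e.g. the matrix with rows `γ(sᵢ)`, makes all minors positive.
-/

open Matrix Filter Set Topology

theorem Matrix.of_row_apply {m n α : Type*} (f : m → n → α) (i : m) : of f i = f i := rfl

theorem Matrix.exists_linearMap_ne_zero_of_det_eq_zero {K ι : Type*} [Field K] [Fintype ι]
    [DecidableEq ι] {M : Matrix ι ι K} (h : M.det = 0) :
    ∃ f : (ι → K) →ₗ[K] K, f ≠ 0 ∧ ∀ j, f (M j) = 0 := by
  obtain ⟨v, hv0, hv⟩ := exists_mulVec_eq_zero_iff.2 h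
  refine ⟨dotProductEquiv K ι v, (LinearEquiv.map_ne_zero_iff _).2 hv0, fun j => ?_⟩
  simpa [mulVec, dotProduct_comm] using congr_fun hv j

theorem Matrix.det_eq_pow_mul_det_of_rows_add_smul {ι R : Type*} [Fintype ι] [LinearOrder ι]
    [CommRing R] (A B : Matrix ι ι R) (P : ι → Prop) [DecidablePred P] (c : R)
    (hA : ∀ j, ¬P j → A j = B j) (hB : ∀ j, P j → ∃ k < j, ¬P k ∧ A j = A k + c • B j) :
    A.det = c ^ (Finset.univ.filter P).card * B.det := by
  choose! p hp using hB
  -- `A = (1 + N) * X`: `N` adds the partner row `p j`, `X` scales the rows in `P` by `c`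
  set N : Matrix ι ι R := of fun j k => if P j ∧ k = p j then 1 else 0
  set X : Matrix ι ι R := of fun j k => (if P j then c else 1) * B j k
  have hL : (1 + N).det = 1 := by
    rw [det_of_isLowerTriangular _ fun i j hij => ?_]
    · refine Finset.prod_eq_one fun i _ => ?_
      simp only [N, add_apply, one_apply_eq, of_apply, add_eq_left, ite_eq_right_iff]
      exact fun ⟨hi, hpi⟩ => absurd hpi (hp i hi).1.ne'
    · have hij : i < j := OrderDual.toDual_lt_toDual.1 hij
      simp only [N, add_apply, of_apply, one_apply_ne hij.ne, zero_add, ite_eq_right_iff]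
      exact fun ⟨hi, hpi⟩ => absurd (hpi ▸ (hp i hi).1) (not_lt.2 hij.le)
  have hNX : N * X = of fun j k => if P j then B (p j) k else 0 := by
    ext j k
    by_cases hj : P j
    · rw [mul_apply, Finset.sum_eq_single (p j) (fun k _ hk => by simp [N, hk]) (by simp)]
      simp [N, X, hj, (hp j hj).2.1]
    · simp [N, X, mul_apply, hj]
  have hfac : A = (1 + N) * X := by
    rw [add_mul, one_mul, hNX]
    ext j k
    by_cases hj : P j
    · obtain ⟨-, hpj, hAj⟩ := hp j hj
      simp [X, hj, hAj, hA _ hpj, add_comm]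
    · simp [X, hj, hA j hj]
  rw [hfac, det_mul, hL, det_mul_column, Finset.prod_ite, Finset.prod_const_one, Finset.prod_const,
    one_mul, mul_one]

theorem Matrix.tendsto_det_of_tendsto_rows {ι R α : Type*} [Fintype ι] [DecidableEq ι] [CommRing R]
    [TopologicalSpace R] [IsTopologicalRing R] {l : Filter α} {M : α → Matrix ι ι R}
    {M₀ : Matrix ι ι R} (h : ∀ j, Tendsto (fun a => M a j) l (𝓝 (M₀ j))) :
    Tendsto (fun a => (M a).det) l (𝓝 M₀.det) :=
  (continuous_id.matrix_det.tendsto M₀).comp (tendsto_pi_nhds.2 h)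

theorem IsPreconnected.mul_pos_of_ne_zero {X : Type*} [TopologicalSpace X] {U : Set X}
    (hU : IsPreconnected U) {F : X → ℝ} (hF : ContinuousOn F U) (h0 : ∀ x ∈ U, F x ≠ 0)
    {a b : X} (ha : a ∈ U) (hb : b ∈ U) : 0 < F a * F b := by
  by_contra! h
  obtain ⟨x, hx, hx0⟩ : ∃ x ∈ U, F x = 0 := by
    rcases mul_nonpos_iff.1 h with ⟨h1, h2⟩ | ⟨h1, h2⟩
    · exact hU.intermediate_value₂ hb ha hF continuousOn_const h2 h1
    · exact hU.intermediate_value₂ ha hb hF continuousOn_const h1 h2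
  exact h0 x hx hx0

theorem convex_setOf_strictMono {ι : Type*} [Preorder ι] : Convex ℝ {r : ι → ℝ | StrictMono r} := by
  intro p hp q hq a b ha hb hab i j hij
  simp only [Pi.add_apply, Pi.smul_apply, smul_eq_mul]
  rcases ha.eq_or_lt with rfl | ha
  · rw [zero_add] at hab
    simpa [hab] using hq hij
  · exact add_lt_add_of_lt_of_le (mul_lt_mul_of_pos_left (hp hij) ha)
      (mul_le_mul_of_nonneg_left (hq hij).le hb)

theorem Submodule.span_pair_add_smul_right {K V : Type*} [Field K] [AddCommGroup V] [Module K V]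
    (x y : V) {c : K} (hc : c ≠ 0) : span K {x, x + c • y} = span K {x, y} := by
  have hx {z : V} : x ∈ span K {x, z} := subset_span (mem_insert _ _)
  have hz {z : V} : z ∈ span K {x, z} := subset_span (mem_insert_of_mem _ rfl)
  apply le_antisymm <;> rw [span_le, insert_subset_iff, singleton_subset_iff]
  · exact ⟨hx, add_mem hx (smul_mem _ _ hz)⟩
  · refine ⟨hx, ?_⟩
    convert smul_mem _ c⁻¹ (sub_mem (hz (z := x + c • y)) hx) using 1
    simp [hc]

theorem eventually_strictMono_shift {ι κ : Type*} [Preorder ι] [LinearOrder κ] [Finite κ]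
    {s : κ → ℝ} (hs : StrictMono s) (hsI : ∀ i, s i ∈ Ico (0:ℝ) 1) {π : ι → κ} {d : ι → Bool}
    (hlex : StrictMono fun j => toLex (π j, d j)) :
    ∀ᶠ δ in 𝓝[>] (0:ℝ), StrictMono (fun j => s (π j) + if d j then δ else 0) ∧
      ∀ j, s (π j) + (if d j then δ else 0) ∈ Icc (0:ℝ) 1 := by
  have hsmall (a b : ℝ) (hab : a < b) : ∀ᶠ δ in 𝓝[>] (0:ℝ), a + δ < b :=
    eventually_nhdsWithin_of_eventually_nhds
      ((eventually_lt_nhds (sub_pos.2 hab)).mono fun δ hδ => by linarith)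
  have hall : ∀ᶠ δ in 𝓝[>] (0:ℝ), (∀ i i', i < i' → s i + δ < s i') ∧ ∀ i, s i + δ < 1 :=
    (eventually_all.2 fun i => eventually_all.2 fun i' =>
      eventually_imp_distrib_left.2 fun h => hsmall _ _ (hs h)).and
    (eventually_all.2 fun i => hsmall _ _ (hsI i).2)
  filter_upwards [self_mem_nhdsWithin, hall] with δ (hδ : 0 < δ) ⟨hgap, hone⟩
  refine ⟨fun j j' hjj' => ?_, fun j => ?_⟩
  · rcases Prod.Lex.toLex_lt_toLex.1 (hlex hjj') with h | ⟨h, h'⟩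
    · have := hgap _ _ h
      dsimp only at this ⊢
      split_ifs <;> linarith
    · simp only [Bool.lt_iff] at h h'
      simp [h, h'.1, h'.2, hδ]
  · have := hone (π j)
    have := (hsI (π j)).1
    split_ifs <;> constructor <;> linarith

variable {n : ℕ}

def IsConvexLift (γ : ℝ → Fin n → ℝ) : Prop :=
  ∀ f : (Fin n → ℝ) →ₗ[ℝ] ℝ, f ≠ 0 →
    (∀ t ∈ Icc (0:ℝ) 1, ∃ k : ℕ, iteratedDeriv k (fun u => f (γ u)) t ≠ 0) ∧
    ∀ (S : Finset ℝ) (ord : ℝ → ℕ),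
      (∀ t ∈ S, t ∈ Icc (0:ℝ) 1 ∧ 1 ≤ ord t ∧
        iteratedDeriv (ord t) (fun u => f (γ u)) t ≠ 0 ∧
        ∀ j < ord t, iteratedDeriv j (fun u => f (γ u)) t = 0) →
      ∑ t ∈ S, ord t ≤ n - 1

noncomputable def confluentMatrix (γ : ℝ → Fin n → ℝ) (t : Fin n → ℝ) (d : Fin n → Bool) :
    Matrix (Fin n) (Fin n) ℝ :=
  of fun j => if d j then deriv γ (t j) else γ (t j)

def interleave {α β : Type*} (u v : Fin n → α → β) (k : Fin (n * 2)) (r : α) : β :=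
  if k.val % 2 = 0 then u k.divNat r else v k.divNat r

section interleave

variable {α β : Type*} (u v : Fin n → α → β) {k : Fin (n * 2)}

theorem interleave_of_even (h : k.val % 2 = 0) : interleave u v k = u k.divNat :=
  funext fun _ => if_pos h

theorem interleave_of_odd (h : k.val % 2 = 1) : interleave u v k = v k.divNat :=
  funext fun _ => if_neg (by omega)

end interleave

-- the selected columns `vᵢ` whose partner `uᵢ` is selected too: they become derivative rows
def pairedColumn (c : Fin n → Fin (n * 2)) (j : Fin n) : Bool :=
  (c j).val % 2 = 1 ∧ ∃ k, (c k).val + 1 = c j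

section pairedColumn

variable {c : Fin n → Fin (n * 2)}

theorem pairedColumn_of_even {j : Fin n} (h : (c j).val % 2 = 0) : pairedColumn c j = false := by
  simp only [pairedColumn, decide_eq_false_iff_not, not_and]
  omega

theorem exists_partner_of_pairedColumn (hc : StrictMono c) {j : Fin n} (hj : pairedColumn c j) :
    ∃ k < j, (c k).val % 2 = 0 ∧ (c j).val % 2 = 1 ∧ (c k).divNat = (c j).divNat := by
  simp only [pairedColumn, decide_eq_true_eq] at hj
  obtain ⟨hodd, k, hk⟩ := hj
  exact ⟨k, hc.lt_iff_lt.1 (by rw [Fin.lt_def]; omega), by omega, hodd,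
    Fin.ext (by simp only [Fin.coe_divNat]; omega)⟩

theorem strictMono_toLex_divNat_pairedColumn (hc : StrictMono c) :
    StrictMono fun j => toLex ((c j).divNat, pairedColumn c j) := by
  intro j j' hjj'
  have hcc : (c j : ℕ) < c j' := hc hjj'
  refine Prod.Lex.toLex_lt_toLex.2 ?_
  rcases (Nat.div_le_div_right hcc.le : (c j : ℕ) / 2 ≤ (c j') / 2).lt_or_eq with h | h
  · exact Or.inl h
  · refine Or.inr ⟨Fin.ext h, Bool.lt_iff.2 ⟨pairedColumn_of_even (by omega), ?_⟩⟩
    simp only [pairedColumn, decide_eq_true_eq]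
    exact ⟨by omega, j, by omega⟩

end pairedColumn

theorem det_submatrix_interleave_mulVec {R : Type*} [CommRing R] (g : Matrix (Fin n) (Fin n) R)
    (u v : Fin n → Fin n → R) (c : Fin n → Fin (n * 2)) :
    ((of fun r k => interleave (fun i => g *ᵥ u i) (fun i => g *ᵥ v i) k r).submatrix id c).det
      = g.det * (of fun j => interleave u v (c j)).det := by
  rw [← det_transpose (of fun j => interleave u v (c j)), ← det_mul]
  congr 1
  ext r j
  simp only [submatrix_apply, id_eq, of_apply, mul_apply, transpose_apply, interleave]
  split_ifs <;> rfl

namespace IsConvexLift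

variable {γ : ℝ → Fin n → ℝ}

theorem sum_lt_of_iteratedDeriv_eq_zero (hγ : IsConvexLift γ) {f : (Fin n → ℝ) →ₗ[ℝ] ℝ} (hf : f ≠ 0) (T : Finset ℝ)
    (m : ℝ → ℕ) (hT : ∀ t ∈ T, t ∈ Icc (0:ℝ) 1 ∧ 0 < m t ∧
      ∀ j < m t, iteratedDeriv j (fun u => f (γ u)) t = 0) :
    ∑ t ∈ T, m t < n := by
  classical
  obtain ⟨hex, hbound⟩ := hγ f hf
  have hn : 0 < n := Nat.pos_of_ne_zero fun hn => hf <| by subst hn; exact Subsingleton.elim _ _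
  let ord : ℝ → ℕ := fun t =>
    if h : ∃ k, iteratedDeriv k (fun u => f (γ u)) t ≠ 0 then Nat.find h else 0
  have hord : ∀ t ∈ T, m t ≤ ord t ∧ iteratedDeriv (ord t) (fun u => f (γ u)) t ≠ 0 ∧
      ∀ j < ord t, iteratedDeriv j (fun u => f (γ u)) t = 0 := by
    intro t ht
    have h := hex t (hT t ht).1
    simp only [ord, dif_pos h]
    refine ⟨(Nat.le_find_iff h _).2 fun j hj => not_not.2 ((hT t ht).2.2 j hj), Nat.find_spec h,
      fun j hj => not_not.1 (Nat.find_min h hj)⟩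
  have := hbound T ord fun t ht =>
    ⟨(hT t ht).1, (hT t ht).2.1.trans_le (hord t ht).1, (hord t ht).2⟩
  have := Finset.sum_le_sum fun t ht => (hord t ht).1
  omega

theorem det_confluentMatrix_ne_zero (hγ : IsConvexLift γ) (hd : Differentiable ℝ γ)
    {t : Fin n → ℝ} (ht : ∀ j, t j ∈ Icc (0:ℝ) 1) {d : Fin n → Bool}
    (hinj : Function.Injective fun j => (t j, d j))
    (hpartner : ∀ j, d j → ∃ k, t k = t j ∧ d k = false) :
    (confluentMatrix γ t d).det ≠ 0 := by
  classical
  intro h0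
  obtain ⟨f, hf, hrows⟩ := exists_linearMap_ne_zero_of_det_eq_zero h0
  have hrow (j : Fin n) : f (if d j then deriv γ (t j) else γ (t j)) = 0 := hrows j
  let fiber (τ : ℝ) := Finset.univ.filter fun j => t j = τ
  have hsum : ∑ τ ∈ Finset.univ.image t, (fiber τ).card = n := by
    simpa using (Finset.card_eq_sum_card_image t Finset.univ).symm
  suffices ∀ τ ∈ Finset.univ.image t, τ ∈ Icc (0:ℝ) 1 ∧ 0 < (fiber τ).card ∧
      ∀ k < (fiber τ).card, iteratedDeriv k (fun u => f (γ u)) τ = 0 by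
    have := hγ.sum_lt_of_iteratedDeriv_eq_zero hf _ _ this
    omega
  intro τ hτ
  obtain ⟨j₀, -, rfl⟩ := Finset.mem_image.1 hτ
  have hcard : (fiber (t j₀)).card = ((fiber (t j₀)).image d).card := by
    refine (Finset.card_image_of_injOn fun a ha b hb hab => hinj ?_).symm
    simp_all [fiber]
  have hval : f (γ (t j₀)) = 0 := by
    cases hd₀ : d j₀
    · simpa [hd₀] using hrow j₀
    · obtain ⟨k, htk, hdk⟩ := hpartner j₀ hd₀
      simpa [hdk, htk] using hrow k
  refine ⟨ht j₀, Finset.card_pos.2 ⟨j₀, by simp [fiber]⟩, fun k hk => ?_⟩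
  have hk2 : k < 2 := hk.trans_le (hcard ▸ Finset.card_le_univ _)
  interval_cases k
  · simpa using hval
  · have himage : (fiber (t j₀)).image d = Finset.univ := Finset.eq_univ_of_card _
      (le_antisymm (Finset.card_le_univ _) (by rw [Fintype.card_bool]; omega))
    obtain ⟨j, hj, hdj⟩ := Finset.mem_image.1 (himage ▸ Finset.mem_univ true)
    have : HasDerivAt (fun u => f (γ u)) (f (deriv γ (t j₀))) (t j₀) :=
      f.toContinuousLinearMap.hasFDerivAt.comp_hasDerivAt _ (hd _).hasDerivAt
    simp only [fiber, Finset.mem_filter] at hj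
    simpa [this.deriv, hdj, hj.2] using hrow j

theorem det_ne_zero_of_strictMono (hγ : IsConvexLift γ) (hd : Differentiable ℝ γ)
    {t : Fin n → ℝ} (ht : StrictMono t) (htI : ∀ j, t j ∈ Icc (0:ℝ) 1) :
    (of fun j => γ (t j)).det ≠ 0 := by
  simpa [confluentMatrix] using hγ.det_confluentMatrix_ne_zero hd htI (d := fun _ => false)
    (fun a b h => ht.injective (congrArg Prod.fst h)) (by simp)

theorem mul_det_pos_of_strictMono (hγ : IsConvexLift γ) (hd : Differentiable ℝ γ)
    {s t : Fin n → ℝ} (hs : StrictMono s) (hsI : ∀ j, s j ∈ Icc (0:ℝ) 1)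
    (ht : StrictMono t) (htI : ∀ j, t j ∈ Icc (0:ℝ) 1) :
    0 < (of fun j => γ (s j)).det * (of fun j => γ (t j)).det := by
  have hU : IsPreconnected ({r : Fin n → ℝ | StrictMono r} ∩ univ.pi fun _ => Icc (0:ℝ) 1) :=
    (convex_setOf_strictMono.inter (convex_pi fun _ _ => convex_Icc 0 1)).isPreconnected
  have hcont : Continuous fun r : Fin n → ℝ => (of fun j => γ (r j)).det := by
    have := hd.continuous
    fun_prop
  refine hU.mul_pos_of_ne_zero hcont.continuousOn (fun r hr => ?_) ⟨hs, fun j _ => hsI j⟩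
    ⟨ht, fun j _ => htI j⟩
  exact hγ.det_ne_zero_of_strictMono hd hr.1 fun j => hr.2 j (mem_univ j)

theorem mul_det_confluentMatrix_pos (hγ : IsConvexLift γ) (hd : Differentiable ℝ γ)
    {s : Fin n → ℝ} (hs : StrictMono s) (hsI : ∀ i, s i ∈ Ico (0:ℝ) 1)
    {π : Fin n → Fin n} {d : Fin n → Bool} (hlex : StrictMono fun j => toLex (π j, d j))
    (hpartner : ∀ j, d j → ∃ k, π k = π j ∧ d k = false) :
    0 < (of fun j => γ (s j)).det * (confluentMatrix γ (fun j => s (π j)) d).det := by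
  have hsI' (i : Fin n) : s i ∈ Icc (0:ℝ) 1 := Ico_subset_Icc_self (hsI i)
  have hpartner_lt (j k : Fin n) (hπ : π k = π j) (hk : d k = false) (hj : d j = true) : k < j :=
    hlex.lt_iff_lt.1 (Prod.Lex.toLex_lt_toLex.2 (Or.inr ⟨hπ, by simp [hk, hj]⟩))
  let τ (δ : ℝ) (j : Fin n) : ℝ := s (π j) + if d j then δ else 0
  have hτ : ∀ᶠ δ in 𝓝[>] (0:ℝ), 0 < δ ∧ StrictMono (τ δ) ∧ ∀ j, τ δ j ∈ Icc (0:ℝ) 1 :=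
    eventually_mem_nhdsWithin.and (eventually_strictMono_shift hs hsI hlex)
  let S (δ : ℝ) : Matrix (Fin n) (Fin n) ℝ :=
    of fun j => if d j then δ⁻¹ • (γ (s (π j) + δ) - γ (s (π j))) else γ (s (π j))
  have hS (δ : ℝ) (hδ : δ ≠ 0) : (of fun j => γ (τ δ j)).det =
      δ ^ (Finset.univ.filter fun j => d j = true).card * (S δ).det := by
    refine det_eq_pow_mul_det_of_rows_add_smul _ _ _ δ (fun j hj => ?_) (fun j hj => ?_)
    · simp [τ, S, hj, of_row_apply]
    · obtain ⟨k, hk, hdk⟩ := hpartner j hj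
      refine ⟨k, hpartner_lt j k hk hdk hj, by simp [hdk], ?_⟩
      simp [τ, S, hj, hdk, hk, smul_inv_smul₀ hδ, of_row_apply]
  have hlim : Tendsto (fun δ => (S δ).det) (𝓝[>] 0)
      (𝓝 (confluentMatrix γ (fun j => s (π j)) d).det) := by
    refine tendsto_det_of_tendsto_rows fun j => ?_
    by_cases hj : d j
    · simpa [S, confluentMatrix, hj, of_row_apply] using
        (hd _).hasDerivAt.tendsto_slope_zero_right
    · simp [S, confluentMatrix, hj, of_row_apply]
  have hnonneg :
      0 ≤ (of fun j => γ (s j)).det * (confluentMatrix γ (fun j => s (π j)) d).det := by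
    refine ge_of_tendsto (hlim.const_mul _) (hτ.mono fun δ ⟨hδ, hmono, hI⟩ => ?_)
    have := hγ.mul_det_pos_of_strictMono hd hs hsI' hmono hI
    rw [hS δ hδ.ne', mul_left_comm] at this
    exact (pos_of_mul_pos_right this (pow_pos hδ _).le).le
  refine hnonneg.lt_of_ne' (mul_ne_zero (hγ.det_ne_zero_of_strictMono hd hs hsI')
    (hγ.det_confluentMatrix_ne_zero hd (fun j => hsI' _) (fun a b h => ?_) fun j hj => ?_))
  · simp only [Prod.mk.injEq] at h
    exact hlex.injective (by rw [hs.injective h.1, h.2])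
  · exact (hpartner j hj).imp fun k hk => ⟨congrArg s hk.1, hk.2⟩

theorem eventually_mul_det_interleave_pos (hγ : IsConvexLift γ) (hd : Differentiable ℝ γ)
    {s : Fin n → ℝ} (hs : StrictMono s) (hsI : ∀ i, s i ∈ Ico (0:ℝ) 1)
    {c : Fin n → Fin (n * 2)} (hc : StrictMono c) :
    ∀ᶠ ε in 𝓝[>] (0:ℝ), 0 < (of fun j => γ (s j)).det * (of fun j =>
      interleave (fun i => γ (s i)) (fun i => γ (s i) + ε • deriv γ (s i)) (c j)).det := by
  let π (j : Fin n) : Fin n := (c j).divNat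
  let d := pairedColumn c
  have hB₀ := hγ.mul_det_confluentMatrix_pos hd hs hsI (strictMono_toLex_divNat_pairedColumn hc)
    fun j hj => (exists_partner_of_pairedColumn hc hj).imp fun k hk =>
      ⟨hk.2.2.2, pairedColumn_of_even hk.2.1⟩
  let M (ε : ℝ) : Matrix (Fin n) (Fin n) ℝ := of fun j => if d j then deriv γ (s (π j))
    else interleave (fun i => γ (s i)) (fun i => γ (s i) + ε • deriv γ (s i)) (c j)
  have hM (ε : ℝ) : (of fun j => interleave (fun i => γ (s i))
      (fun i => γ (s i) + ε • deriv γ (s i)) (c j)).det =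
      ε ^ (Finset.univ.filter fun j => d j = true).card * (M ε).det := by
    refine det_eq_pow_mul_det_of_rows_add_smul _ _ _ ε (fun j hj => ?_) (fun j hj => ?_)
    · simp [M, hj, of_row_apply]
    · obtain ⟨k, hkj, hk, hodd, hπ⟩ := exists_partner_of_pairedColumn hc hj
      refine ⟨k, hkj, by simp [d, pairedColumn_of_even hk], ?_⟩
      simp only [M, of_row_apply, hj, if_true, interleave_of_odd _ _ hodd,
        interleave_of_even _ _ hk]
      rw [hπ]
  have hlim : Tendsto (fun ε => (M ε).det) (𝓝[>] 0)
      (𝓝 (confluentMatrix γ (fun j => s (π j)) d).det) := by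
    refine tendsto_det_of_tendsto_rows fun j => ?_
    by_cases hj : d j
    · simp [M, confluentMatrix, hj, of_row_apply]
    · have : Tendsto (fun ε : ℝ => γ (s (π j)) + ε • deriv γ (s (π j))) (𝓝[>] 0)
          (𝓝 (γ (s (π j)))) :=
        (Continuous.tendsto' (by fun_prop) 0 _ (by simp)).mono_left nhdsWithin_le_nhds
      rcases Nat.mod_two_eq_zero_or_one (c j) with h | h
      · simp [M, confluentMatrix, hj, of_row_apply, interleave_of_even _ _ h, π]
      · simpa [M, confluentMatrix, hj, of_row_apply, interleave_of_odd _ _ h] using this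
  filter_upwards [(hlim.const_mul _).eventually (eventually_gt_nhds hB₀), self_mem_nhdsWithin]
    with ε hε (hε₀ : 0 < ε)
  rw [hM, mul_left_comm]
  exact mul_pos (pow_pos hε₀ _) hε

end IsConvexLift

/-- For a smooth lift `γ` of a convex curve in `ℝP³` and any
`0 < s₁ < s₂ < s₃ < s₄ < 1`, there exist `g ∈ GL₄(ℝ)` and, for each `i`, two vectors
`uᵢ, vᵢ` spanning `span {γ(sᵢ), γ′(sᵢ)}`, so that the 4×8 matrix with columns
`g·u₁, g·v₁, …, g·u₄, g·v₄` has all its 4×4 minors strictly positive. -/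
theorem stmt3 (γ : ℝ → (Fin 4 → ℝ)) (hsmooth : ContDiff ℝ (⊤ : ℕ∞) γ)
    (hconv : ∀ f : (Fin 4 → ℝ) →ₗ[ℝ] ℝ, f ≠ 0 →
      (∀ t ∈ Set.Icc (0:ℝ) 1, ∃ k : ℕ, iteratedDeriv k (fun u => f (γ u)) t ≠ 0) ∧
      ∀ (S : Finset ℝ) (ord : ℝ → ℕ),
        (∀ t ∈ S, t ∈ Set.Icc (0:ℝ) 1 ∧ 1 ≤ ord t ∧
          iteratedDeriv (ord t) (fun u => f (γ u)) t ≠ 0 ∧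
          ∀ j < ord t, iteratedDeriv j (fun u => f (γ u)) t = 0) →
        ∑ t ∈ S, ord t ≤ 3)
    (s : Fin 4 → ℝ) (hs : StrictMono s) (hs0 : 0 < s 0) (hs1 : s 3 < 1) :
    ∃ (g : Matrix (Fin 4) (Fin 4) ℝ) (u v : Fin 4 → (Fin 4 → ℝ)),
      IsUnit g ∧
      (∀ i : Fin 4, Submodule.span ℝ {u i, v i}
          = Submodule.span ℝ {γ (s i), deriv γ (s i)}) ∧
      ∀ c : Fin 4 → Fin 8, StrictMono c →
        0 < ((Matrix.of fun (r : Fin 4) (j : Fin 8) =>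
          if j.val % 2 = 0 then g.mulVec (u ⟨j.val / 2, by have := j.isLt; omega⟩) r
          else g.mulVec (v ⟨j.val / 2, by have := j.isLt; omega⟩) r).submatrix id c).det := by
  have hγ : IsConvexLift γ := hconv
  have hd : Differentiable ℝ γ := hsmooth.differentiable (by simp)
  have hsI (i : Fin 4) : s i ∈ Ico (0:ℝ) 1 :=
    ⟨hs0.le.trans (hs.monotone (Fin.zero_le i)), (hs.monotone (Fin.le_last i)).trans_lt hs1⟩
  obtain ⟨ε, hε, hminors⟩ : ∃ ε > 0, ∀ c : Fin 4 → Fin (4 * 2), StrictMono c →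
      0 < (of fun j => γ (s j)).det * (of fun j => interleave (fun i => γ (s i))
        (fun i => γ (s i) + ε • deriv γ (s i)) (c j)).det :=
    ((eventually_mem_nhdsWithin (s := Ioi 0) (a := 0)).and <| eventually_all.2 fun c =>
      eventually_imp_distrib_left.2 fun hc =>
        hγ.eventually_mul_det_interleave_pos hd hs hsI hc).exists
  refine ⟨of fun j => γ (s j), fun i => γ (s i), fun i => γ (s i) + ε • deriv γ (s i),
    (isUnit_iff_isUnit_det _).2 (hγ.det_ne_zero_of_strictMono hd hs fun i =>
      Ico_subset_Icc_self (hsI i)).isUnit,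
    fun i => Submodule.span_pair_add_smul_right _ _ (ne_of_gt hε), fun c hc => ?_⟩
  have := hminors c hc
  rwa [← det_submatrix_interleave_mulVec] at this
end

section
/- Let X be a totally positive 4×4 real matrix. Then D(X) > 0, where D(X) := (Δ₁₃,₁₂Δ₂₄,₃₄ − Δ₂₄,₁₂Δ₁₃,₃₄ − Δ₁₄,₁₂Δ₂₃,₃₄ + Δ₂₃,₁₂Δ₁₄,₃₄)² − 4(Δ₁₃,₁₂Δ₁₄,₃₄ − Δ₁₄,₁₂Δ₁₃,₃₄)(Δ₂₃,₁₂Δ₂₄,₃₄ − Δ₂₄,₁₂Δ₂₃,₃₄), all minors taken of X. -/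
/-- A 4×4 real matrix is totally positive if every minor (determinant of every square
submatrix given by increasing choices of rows and columns) is strictly positive. -/
def TotallyPositive (X : Matrix (Fin 4) (Fin 4) ℝ) : Prop :=
  ∀ (k : ℕ) (r c : Fin k → Fin 4), StrictMono r → StrictMono c →
    0 < (X.submatrix r c).det

/-- `Δ_{i₁i₂,j₁j₂}`: the 2×2 minor of `X` with rows `i₁ < i₂` and columns `j₁ < j₂`
(indices here are 0-based). -/
def minor2 (X : Matrix (Fin 4) (Fin 4) ℝ) (i₁ i₂ j₁ j₂ : Fin 4) : ℝ :=
  X i₁ j₁ * X i₂ j₂ - X i₁ j₂ * X i₂ j₁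

/-- The discriminant `D(X)` built from the 2×2 minors of `X` (1-based minors
`Δ_{13,12}, Δ_{24,34}`, etc. correspond to 0-based indices below). -/
def Dq (X : Matrix (Fin 4) (Fin 4) ℝ) : ℝ :=
  (minor2 X 0 2 0 1 * minor2 X 1 3 2 3 - minor2 X 1 3 0 1 * minor2 X 0 2 2 3
    - minor2 X 0 3 0 1 * minor2 X 1 2 2 3 + minor2 X 1 2 0 1 * minor2 X 0 3 2 3) ^ 2
  - 4 * (minor2 X 0 2 0 1 * minor2 X 0 3 2 3 - minor2 X 0 3 0 1 * minor2 X 0 2 2 3)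
      * (minor2 X 1 2 0 1 * minor2 X 1 3 2 3 - minor2 X 1 3 0 1 * minor2 X 1 2 2 3)

/-!
`D(X)` is the discriminant of the binary quadratic form `Q x² − S x y + A y²`, where `Q`, `A`
and the two terms of `S` are 2×2 minors of the second compound matrix of `X`. Total positivity
makes `Q > 0`: multiplied by a suitable 2×2 minor, `Q` becomes a sum of products of minors of
`X`. A Plücker-type identity evaluates the form at `(x, y) = (Δ₁₃,₁₂, Δ₂₃,₁₂)` to
`−Δ₁₂,₁₂ Δ₃₄,₁₂ Δ′`, where `Δ′` is another compound minor, positive for the same reason.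
A form with positive leading coefficient that takes a negative value has positive discriminant.
-/

lemma discrim_pos_of_homogeneous_neg {R : Type*} [CommRing R] [LinearOrder R]
    [IsStrictOrderedRing R] {a b c x y : R} (ha : 0 < a)
    (h : a * x ^ 2 + b * x * y + c * y ^ 2 < 0) : 0 < discrim a b c := by
  have hsq : discrim a b c * y ^ 2
      = (2 * a * x + b * y) ^ 2 - 4 * a * (a * x ^ 2 + b * x * y + c * y ^ 2) := by
    rw [discrim]; ring
  have hprod : 0 < discrim a b c * y ^ 2 := by
    rw [hsq]; nlinarith [sq_nonneg (2 * a * x + b * y), mul_neg_of_pos_of_neg ha h]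
  exact pos_of_mul_pos_left hprod (sq_nonneg y)

def minor3 (X : Matrix (Fin 4) (Fin 4) ℝ) (i₁ i₂ i₃ j₁ j₂ j₃ : Fin 4) : ℝ :=
  (X.submatrix ![i₁, i₂, i₃] ![j₁, j₂, j₃]).det

lemma minor3_eq (X : Matrix (Fin 4) (Fin 4) ℝ) (i₁ i₂ i₃ j₁ j₂ j₃ : Fin 4) :
    minor3 X i₁ i₂ i₃ j₁ j₂ j₃
      = X i₁ j₁ * X i₂ j₂ * X i₃ j₃ - X i₁ j₁ * X i₂ j₃ * X i₃ j₂
        - X i₁ j₂ * X i₂ j₁ * X i₃ j₃ + X i₁ j₂ * X i₂ j₃ * X i₃ j₁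
        + X i₁ j₃ * X i₂ j₁ * X i₃ j₂ - X i₁ j₃ * X i₂ j₂ * X i₃ j₁ := by
  simp only [minor3, Matrix.det_fin_three, Matrix.submatrix_apply, Matrix.cons_val_zero,
    Matrix.cons_val_one, Matrix.cons_val_two, Matrix.tail_cons, Matrix.head_cons]

/-- The minor of the second compound matrix of `X` with rows `(i₁ i₂), (j₁ j₂)` and columns
`(0 1), (2 3)`. -/
def compoundMinor (X : Matrix (Fin 4) (Fin 4) ℝ) (i₁ i₂ j₁ j₂ : Fin 4) : ℝ :=
  minor2 X i₁ i₂ 0 1 * minor2 X j₁ j₂ 2 3 - minor2 X j₁ j₂ 0 1 * minor2 X i₁ i₂ 2 3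

lemma Dq_eq_discrim (X : Matrix (Fin 4) (Fin 4) ℝ) :
    Dq X = discrim (compoundMinor X 1 2 1 3)
      (-(compoundMinor X 0 2 1 3 - compoundMinor X 0 3 1 2)) (compoundMinor X 0 2 0 3) := by
  simp only [Dq, discrim, compoundMinor]
  ring

lemma compoundMinor_quadratic_form (X : Matrix (Fin 4) (Fin 4) ℝ) :
    compoundMinor X 1 2 1 3 * minor2 X 0 2 0 1 ^ 2
      + -(compoundMinor X 0 2 1 3 - compoundMinor X 0 3 1 2) * minor2 X 0 2 0 1
          * minor2 X 1 2 0 1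
      + compoundMinor X 0 2 0 3 * minor2 X 1 2 0 1 ^ 2
    = -(minor2 X 0 1 0 1 * minor2 X 2 3 0 1 * compoundMinor X 0 2 1 2) := by
  simp only [compoundMinor, minor2]
  ring

lemma compoundMinor_mul_of_common_first_row (X : Matrix (Fin 4) (Fin 4) ℝ) (a b c : Fin 4) :
    compoundMinor X a b a c * minor2 X a b 0 2
      = X a 2 * minor3 X a b c 0 2 3 * minor2 X a b 0 1
        + X a 0 * minor3 X a b c 0 1 2 * minor2 X a b 2 3 := by
  simp only [compoundMinor, minor2, minor3_eq]
  ring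

lemma compoundMinor_mul_of_common_last_row (X : Matrix (Fin 4) (Fin 4) ℝ) (a b c : Fin 4) :
    compoundMinor X a c b c * minor2 X b c 1 3
      = X c 1 * minor3 X a b c 0 1 3 * minor2 X b c 2 3
        + X c 3 * minor3 X a b c 1 2 3 * minor2 X b c 0 1 := by
  simp only [compoundMinor, minor2, minor3_eq]
  ring

namespace TotallyPositive

variable {X : Matrix (Fin 4) (Fin 4) ℝ}

lemma entry_pos (hX : TotallyPositive X) (i j : Fin 4) : 0 < X i j := by
  have h := hX 1 ![i] ![j] (Subsingleton.strictMono _) (Subsingleton.strictMono _)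
  rwa [Matrix.det_fin_one] at h

lemma minor2_pos (hX : TotallyPositive X) {i₁ i₂ j₁ j₂ : Fin 4} (hi : i₁ < i₂)
    (hj : j₁ < j₂) : 0 < minor2 X i₁ i₂ j₁ j₂ := by
  have h := hX 2 ![i₁, i₂] ![j₁, j₂] ((Subsingleton.strictMono ![i₂]).vecCons hi)
    ((Subsingleton.strictMono ![j₂]).vecCons hj)
  rwa [Matrix.det_fin_two] at h

lemma minor3_pos (hX : TotallyPositive X) {i₁ i₂ i₃ j₁ j₂ j₃ : Fin 4} (hi₁ : i₁ < i₂)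
    (hi₂ : i₂ < i₃) (hj₁ : j₁ < j₂) (hj₂ : j₂ < j₃) : 0 < minor3 X i₁ i₂ i₃ j₁ j₂ j₃ :=
  hX 3 _ _ (((Subsingleton.strictMono ![i₃]).vecCons hi₂).vecCons hi₁)
    (((Subsingleton.strictMono ![j₃]).vecCons hj₂).vecCons hj₁)

lemma compoundMinor_pos_of_common_first_row (hX : TotallyPositive X) {a b c : Fin 4}
    (hab : a < b) (hbc : b < c) : 0 < compoundMinor X a b a c := by
  have h01 : (0 : Fin 4) < 1 := by decide
  have h12 : (1 : Fin 4) < 2 := by decide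
  have h23 : (2 : Fin 4) < 3 := by decide
  have h02 : (0 : Fin 4) < 2 := by decide
  refine pos_of_mul_pos_left ?_ (hX.minor2_pos hab h02).le
  rw [compoundMinor_mul_of_common_first_row]
  exact add_pos
    (mul_pos (mul_pos (hX.entry_pos a 2) (hX.minor3_pos hab hbc h02 h23)) (hX.minor2_pos hab h01))
    (mul_pos (mul_pos (hX.entry_pos a 0) (hX.minor3_pos hab hbc h01 h12)) (hX.minor2_pos hab h23))

lemma compoundMinor_pos_of_common_last_row (hX : TotallyPositive X) {a b c : Fin 4}
    (hab : a < b) (hbc : b < c) : 0 < compoundMinor X a c b c := by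
  have h01 : (0 : Fin 4) < 1 := by decide
  have h12 : (1 : Fin 4) < 2 := by decide
  have h23 : (2 : Fin 4) < 3 := by decide
  have h13 : (1 : Fin 4) < 3 := by decide
  refine pos_of_mul_pos_left ?_ (hX.minor2_pos hbc h13).le
  rw [compoundMinor_mul_of_common_last_row]
  exact add_pos
    (mul_pos (mul_pos (hX.entry_pos c 1) (hX.minor3_pos hab hbc h01 h13)) (hX.minor2_pos hbc h23))
    (mul_pos (mul_pos (hX.entry_pos c 3) (hX.minor3_pos hab hbc h12 h23)) (hX.minor2_pos hbc h01))

end TotallyPositive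

/-- For every totally positive 4×4 real matrix `X`, `D(X) > 0`. -/
theorem stmt4 (X : Matrix (Fin 4) (Fin 4) ℝ) (hX : TotallyPositive X) :
    0 < Dq X := by
  have h01 : (0 : Fin 4) < 1 := by decide
  have h12 : (1 : Fin 4) < 2 := by decide
  have h23 : (2 : Fin 4) < 3 := by decide
  have hQ : 0 < compoundMinor X 1 2 1 3 := hX.compoundMinor_pos_of_common_first_row h12 h23
  have hvalue : 0 < minor2 X 0 1 0 1 * minor2 X 2 3 0 1 * compoundMinor X 0 2 1 2 :=
    mul_pos (mul_pos (hX.minor2_pos h01 h01) (hX.minor2_pos h23 h01))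
      (hX.compoundMinor_pos_of_common_last_row h01 h12)
  rw [Dq_eq_discrim]
  refine discrim_pos_of_homogeneous_neg (x := minor2 X 0 2 0 1) (y := minor2 X 1 2 0 1) hQ ?_
  rw [compoundMinor_quadratic_form]
  exact neg_neg_of_pos hvalue
end
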